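/- Let A be a unital associative algebra and let r ∈ A ⊗ A be a solution of the associative Yang-Baxter equation r¹³r¹² − r¹²r²³ + r²³r¹³ = 0. Then the pair (r, r) is an associative Yang-Baxter pair, and hence the operator R(a) = Σ r⁽¹⁾ a r⁽²⁾ satisfies R(a)R(b) = R(R(a)b + aR(b)), i.e. R is a Rota-Baxter operator of weight 0 on A. -/

import Mathlib

open scoped TensorProduct

/-- `Fbil x y` is the operator `a ↦ x * a * y`. -/
noncomputable def Fbil (k A : Type*) [CommSemiring k] [Ring A] [Algebra k A] :
    A →ₗ[k] A →ₗ[k] (A →ₗ[k] A) :=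
  LinearMap.mk₂ k (fun x y => (LinearMap.mulLeft k x).comp (LinearMap.mulRight k y))
    (fun x x' y => by ext a; simp [add_mul])
    (fun c x y => by ext a; simp [smul_mul_assoc])
    (fun x y y' => by ext a; simp [mul_add])
    (fun c x y => by ext a; simp [mul_smul_comm])

/-- `F2 (Σ x ⊗ y)` is the operator `a ↦ Σ x * a * y`. -/
noncomputable def F2 (k A : Type*) [CommSemiring k] [Ring A] [Algebra k A] :
    A ⊗[k] A →ₗ[k] (A →ₗ[k] A) :=
  TensorProduct.lift (Fbil k A)

/-- `r ↦ r¹² = r ⊗ 1`. -/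
noncomputable def e12 (k A : Type*) [CommSemiring k] [Ring A] [Algebra k A] :
    A ⊗[k] A →ₐ[k] (A ⊗[k] A) ⊗[k] A :=
  Algebra.TensorProduct.includeLeft

/-- `a ⊗ b ↦ (a ⊗ b)¹³ = a ⊗ 1 ⊗ b`. -/
noncomputable def e13 (k A : Type*) [CommSemiring k] [Ring A] [Algebra k A] :
    A ⊗[k] A →ₐ[k] (A ⊗[k] A) ⊗[k] A :=
  Algebra.TensorProduct.map Algebra.TensorProduct.includeLeft (AlgHom.id k A)

/-- `r ↦ r²³ = 1 ⊗ r`. -/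
noncomputable def e23 (k A : Type*) [CommSemiring k] [Ring A] [Algebra k A] :
    A ⊗[k] A →ₐ[k] (A ⊗[k] A) ⊗[k] A :=
  Algebra.TensorProduct.map Algebra.TensorProduct.includeRight (AlgHom.id k A)

/-!
Push the associative Yang-Baxter equation forward along the linear map
`F3 : (x ⊗ y) ⊗ z ↦ ((a, b) ↦ x * a * y * b * z)`. With `R = F2 r` and `S = F2 s`, the terms
`r¹³r¹²`, `r¹²r²³` and `s²³r¹³` become `R (R a * b)`, `R a * R b` and `R (a * S b)`, so the
first equation of an associative Yang-Baxter pair `(r, s)` reads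
`R a * R b = R (R a * b + a * S b)`; for `s = r` this is the Rota-Baxter identity of weight `0`.
-/

noncomputable def F3 (k A : Type*) [CommSemiring k] [Ring A] [Algebra k A] :
    (A ⊗[k] A) ⊗[k] A →ₗ[k] A →ₗ[k] A →ₗ[k] A :=
  TensorProduct.lift <| LinearMap.mk₂ k
    (fun t z => ((LinearMap.mul k A).comp (F2 k A t)).compr₂ (LinearMap.mulRight k z))
    (fun t t' z => by ext a b; simp [add_mul])
    (fun c t z => by ext a b; simp)
    (fun t z z' => by ext a b; simp [mul_add])
    (fun c t z => by ext a b; simp)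

section

variable {k A : Type*} [CommSemiring k] [Ring A] [Algebra k A]

@[simp] lemma F2_tmul (x y a : A) : F2 k A (x ⊗ₜ y) a = x * a * y := by
  simp [F2, Fbil, mul_assoc]

@[simp] lemma F3_tmul (t : A ⊗[k] A) (z a b : A) : F3 k A (t ⊗ₜ z) a b = F2 k A t a * b * z := by
  simp [F3]

@[simp] lemma e12_tmul (x y : A) : e12 k A (x ⊗ₜ y) = (x ⊗ₜ y) ⊗ₜ (1 : A) := rfl

@[simp] lemma e13_tmul (x y : A) : e13 k A (x ⊗ₜ y) = (x ⊗ₜ (1 : A)) ⊗ₜ y := rfl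

@[simp] lemma e23_tmul (x y : A) : e23 k A (x ⊗ₜ y) = ((1 : A) ⊗ₜ x) ⊗ₜ y := rfl

lemma F3_e13_mul_e12 (s t : A ⊗[k] A) (a b : A) :
    F3 k A (e13 k A s * e12 k A t) a b = F2 k A s (F2 k A t a * b) := by
  induction s using TensorProduct.induction_on with
  | zero => simp
  | add s s' hs hs' => simp only [map_add, add_mul, LinearMap.add_apply, hs, hs']
  | tmul x y =>
    induction t using TensorProduct.induction_on with
    | zero => simp
    | add t t' ht ht' => simp only [map_add, mul_add, add_mul, LinearMap.add_apply, ht, ht']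
    | tmul u v => simp [Algebra.TensorProduct.tmul_mul_tmul, mul_assoc]

lemma F3_e12_mul_e23 (t s : A ⊗[k] A) (a b : A) :
    F3 k A (e12 k A t * e23 k A s) a b = F2 k A t a * F2 k A s b := by
  induction s using TensorProduct.induction_on with
  | zero => simp
  | add s s' hs hs' => simp only [map_add, mul_add, LinearMap.add_apply, hs, hs']
  | tmul x y =>
    induction t using TensorProduct.induction_on with
    | zero => simp
    | add t t' ht ht' => simp only [map_add, add_mul, LinearMap.add_apply, ht, ht']
    | tmul u v => simp [Algebra.TensorProduct.tmul_mul_tmul, mul_assoc]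

lemma F3_e23_mul_e13 (s t : A ⊗[k] A) (a b : A) :
    F3 k A (e23 k A s * e13 k A t) a b = F2 k A t (a * F2 k A s b) := by
  induction s using TensorProduct.induction_on with
  | zero => simp
  | add s s' hs hs' => simp only [map_add, add_mul, mul_add, LinearMap.add_apply, hs, hs']
  | tmul x y =>
    induction t using TensorProduct.induction_on with
    | zero => simp
    | add t t' ht ht' => simp only [map_add, mul_add, LinearMap.add_apply, ht, ht']
    | tmul u v => simp [Algebra.TensorProduct.tmul_mul_tmul, mul_assoc]

theorem F2_mul_F2_of_yangBaxterPair {r s : A ⊗[k] A}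
    (h : e13 k A r * e12 k A r - e12 k A r * e23 k A r + e23 k A s * e13 k A r = 0) (a b : A) :
    F2 k A r a * F2 k A r b = F2 k A r (F2 k A r a * b + a * F2 k A s b) := by
  have h' := congrArg (fun t => F3 k A t a b) h
  simp only [map_add, map_sub, LinearMap.add_apply, LinearMap.sub_apply, F3_e13_mul_e12,
    F3_e12_mul_e23, F3_e23_mul_e13, map_zero, LinearMap.zero_apply] at h'
  rw [map_add]
  linear_combination (norm := abel) -h'

end

/-- A solution `r` of the associative Yang-Baxter equation gives the associative Yang-Baxter
pair `(r, r)`, and hence `R = F2 r` is a Rota-Baxter operator of weight `0`. -/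
theorem stmt13 (k A : Type*) [Field k] [Ring A] [Algebra k A] (r : A ⊗[k] A)
    (h : e13 k A r * e12 k A r - e12 k A r * e23 k A r + e23 k A r * e13 k A r = 0) :
    (e13 k A r * e12 k A r - e12 k A r * e23 k A r + e23 k A r * e13 k A r = 0 ∧
     e13 k A r * e12 k A r - e12 k A r * e23 k A r + e23 k A r * e13 k A r = 0) ∧
    ∀ a b : A, F2 k A r a * F2 k A r b = F2 k A r (F2 k A r a * b + a * F2 k A r b) :=
  ⟨⟨h, h⟩, F2_mul_F2_of_yangBaxterPair h⟩
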